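/- The set Σ of pairs (x,y) produced by the Scythe algorithm is an acyclic matching: since a pair (x,y) is only formed when x is the last remaining unmatched element of y₋ with F_{xy} invertible, the order of pair removal is monotone with respect to the relation ⊲, and hence the transitive closure of ⊲ restricted to Σ is a partial order. -/

import Mathlib

/-!
A pair is formed only after every other non-critical element covered by its top has been
removed. So if `x_i ≺ y_j` for distinct pairs, then `x_i` was removed earlier, i.e. `i < j`:
every `⊲`-step strictly increases the index of the pair, and no cycle can close up.
-/

open Function Relation

theorem Relation.TransGen.index_lt {ι α : Type*} [Preorder ι] {p : ι → α}
    {r : α → α → Prop} (hdom : ∀ a b, r a b → a ∈ Set.range p)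
    (hlt : ∀ i j, r (p i) (p j) → i < j) {a b : α} (h : TransGen r a b) :
    ∀ i j, p i = a → p j = b → i < j := by
  induction h with
  | single hab =>
    rintro i j rfl rfl
    exact hlt i j hab
  | tail _ hbc ih =>
    rintro i j rfl rfl
    obtain ⟨m, rfl⟩ := hdom _ _ hbc
    exact (ih i m rfl rfl).trans (hlt m j hbc)

theorem Relation.not_transGen_self_of_index_lt {ι α : Type*} [Preorder ι] {p : ι → α}
    {r : α → α → Prop} (hdom : ∀ a b, r a b → a ∈ Set.range p)
    (hlt : ∀ i j, r (p i) (p j) → i < j) (a : α) : ¬ TransGen r a a := by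
  intro h
  obtain ⟨c, hac, -⟩ := TransGen.head'_iff.mp h
  obtain ⟨i, rfl⟩ := hdom a c hac
  exact lt_irrefl i (h.index_lt hdom hlt i i rfl rfl)

theorem scythe_index_lt {ι X : Type*} [LT ι] {cov : X → X → Prop} {p : ι → X × X}
    {crit : Set X} (hfst : Injective (Prod.fst ∘ p)) (hfst_ne_snd : ∀ i j, (p i).1 ≠ (p j).2)
    (hcrit : ∀ i, (p i).1 ∉ crit)
    (hscythe : ∀ k, ∀ x', cov x' (p k).2 → x' ≠ (p k).1 →
      x' ∈ crit ∨ ∃ j, j < k ∧ (x' = (p j).1 ∨ x' = (p j).2))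
    {i j : ι} (hij : i ≠ j) (hcov : cov (p i).1 (p j).2) : i < j := by
  rcases hscythe j (p i).1 hcov (hfst.ne hij) with hmem | ⟨m, hmj, hfst_eq | hsnd_eq⟩
  · exact absurd hmem (hcrit i)
  · rwa [hfst hfst_eq]
  · exact absurd hsnd_eq (hfst_ne_snd i m)

theorem scythe_produces_acyclic_matching_general
    {X : Type}
    (cov : X → X → Prop)
    (N : ℕ) (p : Fin N → X × X)
    (crit : Set X)
    -- each chosen pair is a covering pair:
    (hcov : ∀ k : Fin N, cov (p k).1 (p k).2)
    -- the elements appearing in the pairs are pairwise distinct (partition axiom):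
    (hdist : ∀ j k : Fin N,
      ((p j).1 = (p k).1 → j = k) ∧ ((p j).2 = (p k).2 → j = k) ∧ (p j).1 ≠ (p k).2)
    -- no paired element was marked critical:
    (hcritdisj : ∀ k : Fin N, (p k).1 ∉ crit ∧ (p k).2 ∉ crit)
    -- the Scythe invariant: when the pair `p k` is formed, `x_k` is the last remaining
    -- non-critical element covered by `y_k`:
    (hscythe : ∀ k : Fin N, ∀ x' : X, cov x' (p k).2 → x' ≠ (p k).1 →
      x' ∈ crit ∨ ∃ j : Fin N, j < k ∧ (x' = (p j).1 ∨ x' = (p j).2)) :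
    -- `Σ = Set.range p` is a partial matching ...
    (∀ q ∈ Set.range p, cov q.1 q.2) ∧
      (∀ q ∈ Set.range p, ∀ q' ∈ Set.range p,
        (q.1 = q'.1 → q = q') ∧ (q.2 = q'.2 → q = q') ∧ q.1 ≠ q'.2) ∧
      -- ... and it is acyclic: the relation `⊲` has no cycles among the pairs, so its
      -- transitive closure is a partial order:
      ∀ q : X × X,
        ¬ Relation.TransGen
          (fun q q' => q ∈ Set.range p ∧ q' ∈ Set.range p ∧ q ≠ q' ∧ cov q.1 q'.2)
          q q := by
  refine ⟨?_, ?_, ?_⟩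
  · rintro _ ⟨k, rfl⟩
    exact hcov k
  · rintro _ ⟨j, rfl⟩ _ ⟨k, rfl⟩
    exact ⟨fun h => congrArg p ((hdist j k).1 h), fun h => congrArg p ((hdist j k).2.1 h),
      (hdist j k).2.2⟩
  · refine not_transGen_self_of_index_lt (p := p) (fun _ _ h => h.1) ?_
    rintro i j ⟨-, -, hne, hc⟩
    exact scythe_index_lt (fun j k h => (hdist j k).1 h) (fun j k => (hdist j k).2.2)
      (fun k => (hcritdisj k).1) hscythe (fun hij => hne (congrArg p hij)) hc

/-- The set `Σ` of pairs produced by the `Scythe` algorithm is an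
acyclic matching. Abstractly: suppose pairs `p 0, p 1, …` in a graded poset (with
covering relation `cov`) are chosen sequentially so that when the pair
`p k = (x_k, y_k)` is chosen, every element `x' ≺ y_k` with `x' ≠ x_k` has already been
removed (as a member of an earlier pair, or marked critical). Then the collection of
chosen pairs is a partial matching, and the relation `(x,y) ⊲ (x',y')` iff `x ≺ y'`
has no cycles among the pairs, i.e. its transitive closure is a partial order. -/
theorem scythe_produces_acyclic_matching
    {X : Type} [Fintype X] [DecidableEq X]
    (cov : X → X → Prop)
    (N : ℕ) (p : Fin N → X × X)
    (crit : Set X)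
    -- each chosen pair is a covering pair:
    (hcov : ∀ k : Fin N, cov (p k).1 (p k).2)
    -- the elements appearing in the pairs are pairwise distinct (partition axiom):
    (hdist : ∀ j k : Fin N,
      ((p j).1 = (p k).1 → j = k) ∧ ((p j).2 = (p k).2 → j = k) ∧ (p j).1 ≠ (p k).2)
    -- no paired element was marked critical:
    (hcritdisj : ∀ k : Fin N, (p k).1 ∉ crit ∧ (p k).2 ∉ crit)
    -- the Scythe invariant: when the pair `p k` is formed, `x_k` is the last remaining
    -- non-critical element covered by `y_k`:
    (hscythe : ∀ k : Fin N, ∀ x' : X, cov x' (p k).2 → x' ≠ (p k).1 →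
      x' ∈ crit ∨ ∃ j : Fin N, j < k ∧ (x' = (p j).1 ∨ x' = (p j).2)) :
    -- `Σ = Set.range p` is a partial matching ...
    (∀ q ∈ Set.range p, cov q.1 q.2) ∧
      (∀ q ∈ Set.range p, ∀ q' ∈ Set.range p,
        (q.1 = q'.1 → q = q') ∧ (q.2 = q'.2 → q = q') ∧ q.1 ≠ q'.2) ∧
      -- ... and it is acyclic: the relation `⊲` has no cycles among the pairs, so its
      -- transitive closure is a partial order:
      ∀ q : X × X,
        ¬ Relation.TransGen
          (fun q q' => q ∈ Set.range p ∧ q' ∈ Set.range p ∧ q ≠ q' ∧ cov q.1 q'.2)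
          q q :=
  scythe_produces_acyclic_matching_general cov N p crit hcov hdist hcritdisj hscythe
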